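/- arXiv:1404.6036 — 5 statements merged into one kernel-verified Lean document; each statement's English description precedes it below -/
import Mathlib

section
/- Every formula built from literals, ⊤, ⊥ using ∧, ∨, ¬, and the binary connective ⋗ can be reduced, using the rewrite rules ¬s ↦ s^c, ¬(F₁∧F₂) ↦ ¬F₁∨¬F₂, ¬(F₁∨F₂) ↦ ¬F₁∧¬F₂, ¬(s⋗F) ↦ s^c ∨ (s⋗¬F), (F₁⋗F₂)⋗F₃ ↦ (F₁⋗F₃)∧((F₁⋗F₂)∨(F₁⋗F₂⋗F₃)), (F₁∧F₂)⋗F₃ ↦ (F₁⋗F₃)∧(F₂⋗F₃), (F₁∨F₂)⋗F₃ ↦ (F₁⋗F₃)∨(F₂⋗F₃), F₁⋗(F₂∧F₃) ↦ (F₁⋗F₂)∧(F₁⋗F₃), F₁⋗(F₂∨F₃) ↦ (F₁⋗F₂)∨(F₁⋗F₃), into a formula in unit chain expansion (i.e., a formula in which every occurrence of ⋗ appears only in chains s₀⋗s₁⋗⋯⋗s_k of atomic symbols). -/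
/-- Atomic symbols: literals from `A` together with ⊤ and ⊥. -/
inductive Atom (A : Type) : Type where
  | lit : A → Atom A
  | top : Atom A
  | bot : Atom A

/-- Complement on atoms, induced by a complement map `c` on literals. -/
def Atom.compl {A : Type} (c : A → A) : Atom A → Atom A
  | .lit a => .lit (c a)
  | .top => .bot
  | .bot => .top

/-- Formulas of gradual classical logic. `grad` is the connective ⋗. -/
inductive Fm (A : Type) : Type where
  | atom : Atom A → Fm A
  | and : Fm A → Fm A → Fm A
  | or : Fm A → Fm A → Fm A
  | neg : Fm A → Fm A
  | grad : Fm A → Fm A → Fm A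

/-- One-step rewriting using only the five ⋗-rules (with congruence closure). -/
inductive GStep {A : Type} : Fm A → Fm A → Prop where
  | gradAssoc (F G H) : GStep (.grad (.grad F G) H)
      (.and (.grad F H) (.or (.grad F G) (.grad F (.grad G H))))
  | gradAndL (F G H) : GStep (.grad (.and F G) H) (.and (.grad F H) (.grad G H))
  | gradOrL (F G H) : GStep (.grad (.or F G) H) (.or (.grad F H) (.grad G H))
  | gradAndR (F G H) : GStep (.grad F (.and G H)) (.and (.grad F G) (.grad F H))
  | gradOrR (F G H) : GStep (.grad F (.or G H)) (.or (.grad F G) (.grad F H))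
  | andL {F F'} (G) : GStep F F' → GStep (.and F G) (.and F' G)
  | andR (F) {G G'} : GStep G G' → GStep (.and F G) (.and F G')
  | orL {F F'} (G) : GStep F F' → GStep (.or F G) (.or F' G)
  | orR (F) {G G'} : GStep G G' → GStep (.or F G) (.or F G')
  | negC {F F'} : GStep F F' → GStep (.neg F) (.neg F')
  | gradL {F F'} (G) : GStep F F' → GStep (.grad F G) (.grad F' G)
  | gradR (F) {G G'} : GStep G G' → GStep (.grad F G) (.grad F G')

/-- One-step rewriting with both the ¬-rules and the ⋗-rules (congruence closure). -/
inductive Step {A : Type} (c : A → A) : Fm A → Fm A → Prop where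
  | negAtom (s) : Step c (.neg (.atom s)) (.atom (s.compl c))
  | negAnd (F G) : Step c (.neg (.and F G)) (.or (.neg F) (.neg G))
  | negOr (F G) : Step c (.neg (.or F G)) (.and (.neg F) (.neg G))
  | negGrad (s F) : Step c (.neg (.grad (.atom s) F))
      (.or (.atom (s.compl c)) (.grad (.atom s) (.neg F)))
  | gradAssoc (F G H) : Step c (.grad (.grad F G) H)
      (.and (.grad F H) (.or (.grad F G) (.grad F (.grad G H))))
  | gradAndL (F G H) : Step c (.grad (.and F G) H) (.and (.grad F H) (.grad G H))
  | gradOrL (F G H) : Step c (.grad (.or F G) H) (.or (.grad F H) (.grad G H))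
  | gradAndR (F G H) : Step c (.grad F (.and G H)) (.and (.grad F G) (.grad F H))
  | gradOrR (F G H) : Step c (.grad F (.or G H)) (.or (.grad F G) (.grad F H))
  | andL {F F'} (G) : Step c F F' → Step c (.and F G) (.and F' G)
  | andR (F) {G G'} : Step c G G' → Step c (.and F G) (.and F G')
  | orL {F F'} (G) : Step c F F' → Step c (.or F G) (.or F' G)
  | orR (F) {G G'} : Step c G G' → Step c (.or F G) (.or F G')
  | negC {F F'} : Step c F F' → Step c (.neg F) (.neg F')
  | gradL {F F'} (G) : Step c F F' → Step c (.grad F G) (.grad F' G)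
  | gradR (F) {G G'} : Step c G G' → Step c (.grad F G) (.grad F G')

/-- Reduction: reflexive-transitive closure of one-step rewriting (all rules). -/
def Red {A : Type} (c : A → A) : Fm A → Fm A → Prop :=
  Relation.ReflTransGen (Step c)

/-- Reduction using only the ⋗-rules. -/
def GRed {A : Type} : Fm A → Fm A → Prop :=
  Relation.ReflTransGen GStep

/-- Unit chains (possibly of length one, i.e. a single atom): s₀⋗s₁⋗⋯⋗s_k. -/
inductive UnitTail {A : Type} : Fm A → Prop where
  | atom (s : Atom A) : UnitTail (.atom s)
  | grad (s : Atom A) {F : Fm A} : UnitTail F → UnitTail (.grad (.atom s) F)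

/-- Formulas in unit chain expansion: built from atoms and unit chains via ∧ and ∨;
in particular no ¬ occurs and every ⋗ lies in a unit chain of atoms. -/
inductive UCE {A : Type} : Fm A → Prop where
  | atom (s : Atom A) : UCE (.atom s)
  | and {F G : Fm A} : UCE F → UCE G → UCE (.and F G)
  | or {F G : Fm A} : UCE F → UCE G → UCE (.or F G)
  | chain (s : Atom A) {F : Fm A} : UnitTail F → UCE (.grad (.atom s) F)

/-- Negation-free formulas. -/
inductive NegFree {A : Type} : Fm A → Prop where
  | atom (s : Atom A) : NegFree (.atom s)
  | and {F G : Fm A} : NegFree F → NegFree G → NegFree (.and F G)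
  | or {F G : Fm A} : NegFree F → NegFree G → NegFree (.or F G)
  | grad {F G : Fm A} : NegFree F → NegFree G → NegFree (.grad F G)

/-- A valuation frame: a local interpretation `I` on prefix-sequences and atoms,
subject to the conditions of gradual classical logic.  The global interpretation `J`
is determined by `I` (see `GFrame.valAux`). -/
structure GFrame (A : Type) (c : A → A) : Type where
  I : List (Atom A) → Atom A → Bool
  I_top : ∀ ψ, I ψ .top = true
  I_bot : ∀ ψ, I ψ .bot = false
  I_compl : ∀ ψ (a : A), (I ψ (.lit a) = false ↔ I ψ (.lit (c a)) = true)
  I_sync : ∀ ψ ψ' s, ψ.length = ψ'.length → I ψ s = I ψ' s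

/-- Valuation relative to a prefix ψ.  On a unit chain s₀⋗⋯⋗s_k (with prefix ε)
this computes the global interpretation J(s₀…s_k) = 1 iff every local step is 1;
∧ and ∨ are Boolean. -/
def GFrame.valAux {A : Type} {c : A → A} (M : GFrame A c) :
    List (Atom A) → Fm A → Bool
  | ψ, .atom s => M.I ψ s
  | ψ, .and F G => M.valAux ψ F && M.valAux ψ G
  | ψ, .or F G => M.valAux ψ F || M.valAux ψ G
  | ψ, .neg F => !(M.valAux ψ F)
  | ψ, .grad (.atom s) G => M.I ψ s && M.valAux (ψ ++ [s]) G
  | _, .grad _ _ => false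

/-- The valuation [M ⊨ F]. -/
def GFrame.val {A : Type} {c : A → A} (M : GFrame A c) (F : Fm A) : Bool :=
  M.valAux [] F

/-- Push `s ⋗ ·` through ∧ and ∨ (normalization step of `recursiveReduce`). -/
def gradDist {A : Type} (s : Atom A) : Fm A → Fm A
  | .and F G => .and (gradDist s F) (gradDist s G)
  | .or F G => .or (gradDist s F) (gradDist s G)
  | F => .grad (.atom s) F

/-- `recursiveReduce`: swap ∧/∨, complement non-chain atoms, and replace a chain
with head s and tail T by s^c ∨ (s ⋗ recursiveReduce T), normalized into unit
chain expansion.  On a unit chain s₀⋗⋯⋗s_k it yields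
s₀^c ∨ (s₀⋗s₁^c) ∨ ⋯ ∨ (s₀⋗⋯⋗s_{k−1}⋗s_k^c). -/
def recursiveReduce {A : Type} (c : A → A) : Fm A → Fm A
  | .atom s => .atom (s.compl c)
  | .and F G => .or (recursiveReduce c F) (recursiveReduce c G)
  | .or F G => .and (recursiveReduce c F) (recursiveReduce c G)
  | .neg F => .neg (recursiveReduce c F)
  | .grad (.atom s) G => .or (.atom (s.compl c)) (gradDist s (recursiveReduce c G))
  | .grad F G => .grad (recursiveReduce c F) (recursiveReduce c G)

/-!
Induction on the formula: it suffices that formulas reducing to unit chain expansion are closed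
under ∧, ∨, ¬ and ⋗. For `F ⋗ G` with `F`, `G` in unit chain expansion, the left distribution rules
bring `F` down to unit chains, and a chain `s ⋗ T` on the left is peeled off by associativity,
`(s ⋗ T) ⋗ G ↦ (s ⋗ G) ∧ ((s ⋗ T) ∨ (s ⋗ (T ⋗ G)))`, leaving only an atom `s` in front of a
formula in unit chain expansion, which the right distribution rules push down to chains.
Negation is pushed to unit chains by De Morgan, and `¬(s ⋗ T) ↦ s^c ∨ (s ⋗ ¬T)` recurses on
the tail.
-/

variable {A : Type} {c : A → A}

namespace Red

theorem and {F F' G G' : Fm A} (hF : Red c F F') (hG : Red c G G') :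
    Red c (.and F G) (.and F' G') :=
  (Relation.ReflTransGen.lift (Fm.and · G) (fun _ _ s => Step.andL G s) _ _ hF).trans
    (Relation.ReflTransGen.lift (Fm.and F' ·) (fun _ _ s => Step.andR F' s) _ _ hG)

theorem or {F F' G G' : Fm A} (hF : Red c F F') (hG : Red c G G') :
    Red c (.or F G) (.or F' G') :=
  (Relation.ReflTransGen.lift (Fm.or · G) (fun _ _ s => Step.orL G s) _ _ hF).trans
    (Relation.ReflTransGen.lift (Fm.or F' ·) (fun _ _ s => Step.orR F' s) _ _ hG)

theorem grad {F F' G G' : Fm A} (hF : Red c F F') (hG : Red c G G') :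
    Red c (.grad F G) (.grad F' G') :=
  (Relation.ReflTransGen.lift (Fm.grad · G) (fun _ _ s => Step.gradL G s) _ _ hF).trans
    (Relation.ReflTransGen.lift (Fm.grad F' ·) (fun _ _ s => Step.gradR F' s) _ _ hG)

theorem neg {F F' : Fm A} (h : Red c F F') : Red c (.neg F) (.neg F') :=
  Relation.ReflTransGen.lift Fm.neg (fun _ _ s => Step.negC s) _ _ h

end Red

def ReducesToUCE (c : A → A) (F : Fm A) : Prop :=
  ∃ F', Red c F F' ∧ UCE F'

namespace ReducesToUCE

theorem of_uce {F : Fm A} (h : UCE F) : ReducesToUCE c F :=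
  ⟨F, .refl, h⟩

theorem of_red {F G : Fm A} (h : Red c F G) (hG : ReducesToUCE c G) : ReducesToUCE c F :=
  let ⟨G', r, u⟩ := hG
  ⟨G', h.trans r, u⟩

theorem head {F G : Fm A} (h : Step c F G) (hG : ReducesToUCE c G) : ReducesToUCE c F :=
  of_red (.single h) hG

theorem and {F G : Fm A} (hF : ReducesToUCE c F) (hG : ReducesToUCE c G) :
    ReducesToUCE c (.and F G) :=
  let ⟨F', rF, uF⟩ := hF
  let ⟨G', rG, uG⟩ := hG
  ⟨.and F' G', rF.and rG, .and uF uG⟩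

theorem or {F G : Fm A} (hF : ReducesToUCE c F) (hG : ReducesToUCE c G) :
    ReducesToUCE c (.or F G) :=
  let ⟨F', rF, uF⟩ := hF
  let ⟨G', rG, uG⟩ := hG
  ⟨.or F' G', rF.or rG, .or uF uG⟩

theorem gradAtom_of_uce (s : Atom A) {G : Fm A} (h : UCE G) :
    ReducesToUCE c (.grad (.atom s) G) := by
  induction h with
  | atom t => exact of_uce (.chain s (.atom t))
  | and _ _ ih₁ ih₂ => exact head (.gradAndR _ _ _) (ih₁.and ih₂)
  | or _ _ ih₁ ih₂ => exact head (.gradOrR _ _ _) (ih₁.or ih₂)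
  | chain t hT => exact of_uce (.chain s (.grad t hT))

theorem gradAtom (s : Atom A) {G : Fm A} (h : ReducesToUCE c G) :
    ReducesToUCE c (.grad (.atom s) G) :=
  let ⟨_, r, u⟩ := h
  of_red (Red.grad .refl r) (gradAtom_of_uce s u)

theorem grad_of_unitTail {T G : Fm A} (hT : UnitTail T) (hG : UCE G) :
    ReducesToUCE c (.grad T G) := by
  induction hT with
  | atom s => exact gradAtom_of_uce s hG
  | grad s hT' ih =>
    exact head (.gradAssoc _ _ _)
      ((gradAtom_of_uce s hG).and ((of_uce (.chain s hT')).or (gradAtom s ih)))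

theorem grad_of_uce {F G : Fm A} (hF : UCE F) (hG : UCE G) : ReducesToUCE c (.grad F G) := by
  induction hF with
  | atom s => exact gradAtom_of_uce s hG
  | and _ _ ih₁ ih₂ => exact head (.gradAndL _ _ _) (ih₁.and ih₂)
  | or _ _ ih₁ ih₂ => exact head (.gradOrL _ _ _) (ih₁.or ih₂)
  | chain s hT => exact grad_of_unitTail (.grad s hT) hG

theorem grad {F G : Fm A} (hF : ReducesToUCE c F) (hG : ReducesToUCE c G) :
    ReducesToUCE c (.grad F G) :=
  let ⟨_, rF, uF⟩ := hF
  let ⟨_, rG, uG⟩ := hG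
  of_red (rF.grad rG) (grad_of_uce uF uG)

theorem negAtom (s : Atom A) : ReducesToUCE c (.neg (.atom s)) :=
  head (.negAtom s) (of_uce (.atom _))

theorem neg_of_unitTail {T : Fm A} (hT : UnitTail T) : ReducesToUCE c (.neg T) := by
  induction hT with
  | atom s => exact negAtom s
  | grad s _ ih => exact head (.negGrad _ _) ((of_uce (.atom _)).or (gradAtom s ih))

theorem neg_of_uce {F : Fm A} (h : UCE F) : ReducesToUCE c (.neg F) := by
  induction h with
  | atom s => exact negAtom s
  | and _ _ ih₁ ih₂ => exact head (.negAnd _ _) (ih₁.or ih₂)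
  | or _ _ ih₁ ih₂ => exact head (.negOr _ _) (ih₁.and ih₂)
  | chain s hT => exact neg_of_unitTail (.grad s hT)

theorem neg {F : Fm A} (h : ReducesToUCE c F) : ReducesToUCE c (.neg F) :=
  let ⟨_, r, u⟩ := h
  of_red r.neg (neg_of_uce u)

end ReducesToUCE

theorem stmt0_general {A : Type} (c : A → A) (F : Fm A) :
    ∃ F' : Fm A, Red c F F' ∧ UCE F' := by
  change ReducesToUCE c F
  induction F with
  | atom s => exact .of_uce (.atom s)
  | and _ _ ihF ihG => exact ihF.and ihG
  | or _ _ ihF ihG => exact ihF.or ihG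
  | neg _ ih => exact ih.neg
  | grad _ _ ihF ihG => exact ihF.grad ihG

/-- Every formula reduces, via the ¬- and ⋗-rewrite rules,
into some formula in unit chain expansion. -/
theorem stmt0 {A : Type} (c : A → A) (hc : Function.Involutive c) (F : Fm A) :
    ∃ F' : Fm A, Red c F F' ∧ UCE F' :=
  stmt0_general c F
end

section
/- For any unit chain s₀⋗s₁⋗⋯⋗s_k and any valuation frame M: if [M ⊨ s₀⋗⋯⋗s_k] = 1 then [M ⊨ recursiveReduce(s₀⋗⋯⋗s_k)] = 0, and if [M ⊨ s₀⋗⋯⋗s_k] = 0 then [M ⊨ recursiveReduce(s₀⋗⋯⋗s_k)] = 1; these two cases are mutually exclusive. -/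
lemma valAux_compl {A : Type} {c : A → A} (M : GFrame A c) (ψ : List (Atom A))
    (s : Atom A) : M.valAux ψ (.atom (s.compl c)) = !M.valAux ψ (.atom s) := by
  cases s with
  | lit a =>
    simp only [GFrame.valAux, Atom.compl]
    rcases h : M.I ψ (.lit a) with _ | _
    · simp [(M.I_compl ψ a).mp h]
    · simp only [Bool.not_true]
      by_contra hne
      have := (M.I_compl ψ a).mpr (by revert hne; cases M.I ψ (.lit (c a)) <;> simp)
      rw [h] at this; exact absurd this (by simp)
  | top => simp [GFrame.valAux, Atom.compl, M.I_top, M.I_bot]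
  | bot => simp [GFrame.valAux, Atom.compl, M.I_top, M.I_bot]

lemma valAux_gradDist {A : Type} {c : A → A} (M : GFrame A c) (s : Atom A) :
    ∀ (F : Fm A) (ψ : List (Atom A)),
      M.valAux ψ (gradDist s F) = (M.I ψ s && M.valAux (ψ ++ [s]) F) := by
  intro F
  induction F with
  | and F G ihF ihG =>
    intro ψ
    simp only [gradDist, GFrame.valAux, ihF, ihG]
    cases M.I ψ s <;> simp
  | or F G ihF ihG =>
    intro ψ
    simp only [gradDist, GFrame.valAux, ihF, ihG]
    cases M.I ψ s <;> simp
  | atom t => intro ψ; simp [gradDist, GFrame.valAux]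
  | neg F _ => intro ψ; simp [gradDist, GFrame.valAux]
  | grad F G _ _ => intro ψ; simp [gradDist, GFrame.valAux]

lemma valAux_rr {A : Type} {c : A → A} (M : GFrame A c) {F : Fm A}
    (h : UnitTail F) : ∀ ψ, M.valAux ψ (recursiveReduce c F) = !M.valAux ψ F := by
  induction h with
  | atom s => intro ψ; exact valAux_compl M ψ s
  | grad s hF ih =>
    intro ψ
    simp only [recursiveReduce, GFrame.valAux, valAux_gradDist, ih,
      valAux_compl M ψ s]
    have hcompl := valAux_compl M ψ s
    simp only [GFrame.valAux] at hcompl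
    cases hI : M.I ψ s <;> simp [GFrame.valAux, hI, hcompl, hI ▸ hcompl]

/-- elementary complementation on unit chains. -/
theorem stmt4 {A : Type} {c : A → A} (hc : Function.Involutive c)
    (M : GFrame A c) {F : Fm A} (h : UnitTail F) :
    (M.val F = true → M.val (recursiveReduce c F) = false) ∧
    (M.val F = false → M.val (recursiveReduce c F) = true) ∧
    ¬ (M.val F = true ∧ M.val F = false) := by
  have key := valAux_rr M h []
  unfold GFrame.val
  refine ⟨fun hv => by simp [key, hv], fun hv => by simp [key, hv], ?_⟩
  rintro ⟨h1, h2⟩; rw [h1] at h2; exact absurd h2 (by simp)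
end

section
/- The reduction system of gradual classical logic is normalizing in value: for every formula F, every valuation frame M, and any two formulas F₁, F₂ in unit chain expansion that F reduces into (possibly by different sequences of rule applications), [M ⊨ F₁] = [M ⊨ F₂]. Consequently gradual classical logic is neither paraconsistent nor inconsistent: for no F and M do both [M ⊨ F] = 1 and [M ⊨ ¬F] = 1 hold, nor both equal 0. -/
section Aux

variable {A : Type} {c : A → A}

/-- Length-based interpretation (well-defined by `I_sync`). -/
def GFrame.semI (M : GFrame A c) (n : ℕ) (s : Atom A) : Bool :=
  M.I (List.replicate n .top) s

lemma GFrame.I_eq_semI (M : GFrame A c) (ψ : List (Atom A)) (s : Atom A) :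
    M.I ψ s = M.semI ψ.length s := by
  apply M.I_sync
  simp

lemma GFrame.semI_compl (M : GFrame A c) (hc : Function.Involutive c)
    (n : ℕ) (s : Atom A) : M.semI n (s.compl c) = !(M.semI n s) := by
  cases s with
  | lit a =>
    unfold GFrame.semI Atom.compl
    rcases h : M.I (List.replicate n .top) (.lit a) with _ | _
    · have := (M.I_compl (List.replicate n .top) a).mp h
      simp [this]
    · rcases h2 : M.I (List.replicate n .top) (.lit (c a)) with _ | _
      · simp
      · have := (M.I_compl (List.replicate n .top) a).mpr h2
        rw [this] at h
        exact absurd h (by simp)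
  | top => simp [GFrame.semI, Atom.compl, M.I_top, M.I_bot]
  | bot => simp [GFrame.semI, Atom.compl, M.I_top, M.I_bot]

/-- A compositional length-based semantics which is invariant under all
reduction steps and agrees with `valAux` on unit chain expansions. -/
def GFrame.sem (M : GFrame A c) : ℕ → Fm A → Bool
  | n, .atom s => M.semI n s
  | n, .and F G => M.sem n F && M.sem n G
  | n, .or F G => M.sem n F || M.sem n G
  | n, .neg F => !(M.sem n F)
  | n, .grad F G => M.sem n F && M.sem (n + 1) G

lemma GFrame.step_sem (M : GFrame A c) (hc : Function.Involutive c)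
    {F F' : Fm A} (h : Step c F F') : ∀ n, M.sem n F = M.sem n F' := by
  induction h with
  | negAtom s => intro n; simp [GFrame.sem, M.semI_compl hc]
  | negAnd F G => intro n; simp [GFrame.sem]
  | negOr F G => intro n; simp [GFrame.sem]
  | negGrad s F =>
    intro n
    simp only [GFrame.sem, M.semI_compl hc]
    cases M.semI n s <;> cases M.sem (n + 1) F <;> rfl
  | gradAssoc F G H =>
    intro n
    simp only [GFrame.sem]
    cases M.sem n F <;> cases M.sem (n + 1) G <;> cases M.sem (n + 1 + 1) H <;>
      cases M.sem (n + 1) H <;> rfl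
  | gradAndL F G H =>
    intro n
    simp only [GFrame.sem]
    cases M.sem n F <;> cases M.sem n G <;> cases M.sem (n + 1) H <;> rfl
  | gradOrL F G H =>
    intro n
    simp only [GFrame.sem]
    cases M.sem n F <;> cases M.sem n G <;> cases M.sem (n + 1) H <;> rfl
  | gradAndR F G H =>
    intro n
    simp only [GFrame.sem]
    cases M.sem n F <;> cases M.sem (n + 1) G <;> cases M.sem (n + 1) H <;> rfl
  | gradOrR F G H =>
    intro n
    simp only [GFrame.sem]
    cases M.sem n F <;> cases M.sem (n + 1) G <;> cases M.sem (n + 1) H <;> rfl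
  | andL G _ ih => intro n; simp [GFrame.sem, ih n]
  | andR F _ ih => intro n; simp [GFrame.sem, ih n]
  | orL G _ ih => intro n; simp [GFrame.sem, ih n]
  | orR F _ ih => intro n; simp [GFrame.sem, ih n]
  | negC _ ih => intro n; simp [GFrame.sem, ih n]
  | gradL G _ ih => intro n; simp [GFrame.sem, ih n]
  | gradR F _ ih => intro n; simp [GFrame.sem, ih (n + 1)]

lemma GFrame.red_sem (M : GFrame A c) (hc : Function.Involutive c)
    {F F' : Fm A} (h : Red c F F') : ∀ n, M.sem n F = M.sem n F' := by
  induction h with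
  | refl => intro n; rfl
  | tail _ hstep ih => intro n; rw [ih n, M.step_sem hc hstep n]

lemma GFrame.unitTail_val (M : GFrame A c) {F : Fm A} (h : UnitTail F) :
    ∀ ψ : List (Atom A), M.valAux ψ F = M.sem ψ.length F := by
  induction h with
  | atom s => intro ψ; simp [GFrame.valAux, GFrame.sem, M.I_eq_semI]
  | grad s _ ih =>
    intro ψ
    simp only [GFrame.valAux, GFrame.sem, M.I_eq_semI]
    rw [ih (ψ ++ [s])]
    simp

lemma GFrame.uce_val (M : GFrame A c) {F : Fm A} (h : UCE F) :
    ∀ ψ : List (Atom A), M.valAux ψ F = M.sem ψ.length F := by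
  induction h with
  | atom s => intro ψ; simp [GFrame.valAux, GFrame.sem, M.I_eq_semI]
  | and _ _ ih1 ih2 => intro ψ; simp [GFrame.valAux, GFrame.sem, ih1 ψ, ih2 ψ]
  | or _ _ ih1 ih2 => intro ψ; simp [GFrame.valAux, GFrame.sem, ih1 ψ, ih2 ψ]
  | chain s ht =>
    intro ψ
    simp only [GFrame.valAux, GFrame.sem, M.I_eq_semI]
    rw [M.unitTail_val ht (ψ ++ [s])]
    simp

lemma GFrame.val_of_red (M : GFrame A c) (hc : Function.Involutive c)
    {F F' : Fm A} (h : Red c F F') (hu : UCE F') : M.val F' = M.sem 0 F := by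
  have := M.uce_val hu ([] : List (Atom A))
  simp only [List.length_nil] at this
  rw [GFrame.val, this, M.red_sem hc h 0]

end Aux

/-- normalization in value, and consequently gradual classical logic
is neither paraconsistent nor inconsistent. -/
theorem stmt8 {A : Type} (c : A → A) (hc : Function.Involutive c) :
    (∀ (F : Fm A) (M : GFrame A c) (F₁ F₂ : Fm A),
      Red c F F₁ → UCE F₁ → Red c F F₂ → UCE F₂ → M.val F₁ = M.val F₂) ∧
    (∀ (F : Fm A) (M : GFrame A c) (F₁ F₂ : Fm A),
      Red c F F₁ → UCE F₁ → Red c (Fm.neg F) F₂ → UCE F₂ →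
        ¬ (M.val F₁ = true ∧ M.val F₂ = true) ∧
        ¬ (M.val F₁ = false ∧ M.val F₂ = false)) := by
  constructor
  · intro F M F₁ F₂ h1 hu1 h2 hu2
    rw [M.val_of_red hc h1 hu1, M.val_of_red hc h2 hu2]
  · intro F M F₁ F₂ h1 hu1 h2 hu2
    rw [M.val_of_red hc h1 hu1, M.val_of_red hc h2 hu2]
    simp only [GFrame.sem]
    cases M.sem 0 F <;> simp
end

section
/- For formulas in unit chain expansion under any fixed valuation frame, the rewrite pairs (F[(F_a∧F_b)⋗F_c], F'[(F_a⋗F_c)∧(F_b⋗F_c)]), (F[(F_a∨F_b)⋗F_c], F'[(F_a⋗F_c)∨(F_b⋗F_c)]), (F[F_a⋗(F_b∧F_c)], F'[(F_a⋗F_b)∧(F_a⋗F_c)]), (F[F_a⋗(F_b∨F_c)], F'[(F_a⋗F_b)∨(F_a⋗F_c)]), and (F[(F_a⋗F_b)⋗F_c], F'[(F_a⋗F_c)∧((F_a⋗F_b)∨(F_a⋗F_b⋗F_c))]) are bisimilar in value: all unit-chain-expansion reducts of both sides of each pair have the same valuation, provided no ¬ occurs. -/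
/-- One-hole (negation-free) formula contexts. -/
inductive Ctx (A : Type) : Type where
  | hole : Ctx A
  | andL : Ctx A → Fm A → Ctx A
  | andR : Fm A → Ctx A → Ctx A
  | orL : Ctx A → Fm A → Ctx A
  | orR : Fm A → Ctx A → Ctx A
  | gradL : Ctx A → Fm A → Ctx A
  | gradR : Fm A → Ctx A → Ctx A

/-- Fill the hole of a context with a formula. -/
def Ctx.fill {A : Type} : Ctx A → Fm A → Fm A
  | .hole, F => F
  | .andL C G, F => .and (C.fill F) G
  | .andR G C, F => .and G (C.fill F)
  | .orL C G, F => .or (C.fill F) G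
  | .orR G C, F => .or G (C.fill F)
  | .gradL C G, F => .grad (C.fill F) G
  | .gradR G C, F => .grad G (C.fill F)

/-- Value-bisimilarity of two (negation-free) formulas: all of their
unit-chain-expansion reducts get the same valuation under `M`. -/
def Bisim {A : Type} {c : A → A} (M : GFrame A c) (F F' : Fm A) : Prop :=
  ∀ F₁ F₂ : Fm A, GRed F F₁ → UCE F₁ → GRed F' F₂ → UCE F₂ →
    M.val F₁ = M.val F₂


/-- Depth-indexed compositional valuation that is invariant under `GStep`. -/
def gval {A : Type} (J : ℕ → Atom A → Bool) : ℕ → Fm A → Bool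
  | n, .atom s => J n s
  | n, .and F G => gval J n F && gval J n G
  | n, .or F G => gval J n F || gval J n G
  | _, .neg _ => false
  | n, .grad F G => gval J n F && gval J (n + 1) G

theorem gval_step_inv {A : Type} (J : ℕ → Atom A → Bool) {F F' : Fm A}
    (h : GStep F F') : ∀ n, gval J n F = gval J n F' := by
  induction h with
  | gradAssoc F G H =>
      intro n
      simp only [gval]
      cases gval J n F <;> cases gval J (n+1) G <;> cases gval J (n+1) H <;>
        cases gval J (n+2) H <;> rfl
  | gradAndL F G H =>
      intro n; simp only [gval]
      cases gval J n F <;> cases gval J n G <;> cases gval J (n+1) H <;> rfl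
  | gradOrL F G H =>
      intro n; simp only [gval]
      cases gval J n F <;> cases gval J n G <;> cases gval J (n+1) H <;> rfl
  | gradAndR F G H =>
      intro n; simp only [gval]
      cases gval J n F <;> cases gval J (n+1) G <;> cases gval J (n+1) H <;> rfl
  | gradOrR F G H =>
      intro n; simp only [gval]
      cases gval J n F <;> cases gval J (n+1) G <;> cases gval J (n+1) H <;> rfl
  | andL G _ ih => intro n; simp only [gval, ih n]
  | andR F _ ih => intro n; simp only [gval, ih n]
  | orL G _ ih => intro n; simp only [gval, ih n]
  | orR F _ ih => intro n; simp only [gval, ih n]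
  | negC _ _ => intro n; simp only [gval]
  | gradL G _ ih => intro n; simp only [gval, ih n]
  | gradR F _ ih => intro n; simp only [gval, ih (n+1)]

theorem gval_red_inv {A : Type} (J : ℕ → Atom A → Bool) {F F' : Fm A}
    (h : GRed F F') (n : ℕ) : gval J n F = gval J n F' := by
  induction h with
  | refl => rfl
  | tail _ hstep ih => exact ih.trans (gval_step_inv J hstep n)

/-- The canonical depth interpretation associated to a frame. -/
def GFrame.J {A : Type} {c : A → A} (M : GFrame A c) (n : ℕ) (s : Atom A) : Bool :=
  M.I (List.replicate n .top) s

theorem gval_valAux_tail {A : Type} {c : A → A} (M : GFrame A c) {F : Fm A}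
    (h : UnitTail F) : ∀ ψ : List (Atom A), M.valAux ψ F = gval M.J ψ.length F := by
  induction h with
  | atom s =>
      intro ψ
      simp only [GFrame.valAux, gval, GFrame.J]
      exact M.I_sync ψ _ s (by simp)
  | grad s hF ih =>
      intro ψ
      simp only [GFrame.valAux, gval, GFrame.J]
      rw [M.I_sync ψ (List.replicate ψ.length .top) s (by simp), ih (ψ ++ [s])]
      simp

theorem gval_valAux {A : Type} {c : A → A} (M : GFrame A c) {F : Fm A}
    (h : UCE F) : ∀ ψ : List (Atom A), M.valAux ψ F = gval M.J ψ.length F := by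
  induction h with
  | atom s =>
      intro ψ
      simp only [GFrame.valAux, gval, GFrame.J]
      exact M.I_sync ψ _ s (by simp)
  | and _ _ ih1 ih2 => intro ψ; simp only [GFrame.valAux, gval, ih1 ψ, ih2 ψ]
  | or _ _ ih1 ih2 => intro ψ; simp only [GFrame.valAux, gval, ih1 ψ, ih2 ψ]
  | chain s hT =>
      intro ψ
      simp only [GFrame.valAux, gval, GFrame.J]
      rw [M.I_sync ψ (List.replicate ψ.length .top) s (by simp),
        gval_valAux_tail M hT (ψ ++ [s])]
      simp

/-- Any two UCE reducts of a common formula have the same valuation. -/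
theorem uce_reducts_val {A : Type} {c : A → A} (M : GFrame A c) {F X Y : Fm A}
    (hX : GRed F X) (uX : UCE X) (hY : GRed F Y) (uY : UCE Y) :
    M.val X = M.val Y := by
  have eX : M.val X = gval M.J 0 X := gval_valAux M uX []
  have eY : M.val Y = gval M.J 0 Y := gval_valAux M uY []
  rw [eX, eY, ← gval_red_inv M.J hX 0, ← gval_red_inv M.J hY 0]

theorem ctx_gstep {A : Type} (C : Ctx A) {F F' : Fm A} (h : GStep F F') :
    GStep (C.fill F) (C.fill F') := by
  induction C with
  | hole => exact h
  | andL C G ih => exact GStep.andL G ih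
  | andR G C ih => exact GStep.andR G ih
  | orL C G ih => exact GStep.orL G ih
  | orR G C ih => exact GStep.orR G ih
  | gradL C G ih => exact GStep.gradL G ih
  | gradR G C ih => exact GStep.gradR G ih

theorem bisim_of_gstep {A : Type} {c : A → A} (M : GFrame A c) {F F' : Fm A}
    (h : GStep F F') : Bisim M F F' := by
  intro F₁ F₂ h1 u1 h2 u2
  exact uce_reducts_val M h1 u1 (Relation.ReflTransGen.head h h2) u2

/-- the five ⋗-rewrite pairs, placed in an arbitrary negation-free
context, are bisimilar in value. -/
theorem stmt11 {A : Type} {c : A → A} (M : GFrame A c)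
    (C : Ctx A) (Fa Fb Fc : Fm A) :
    (NegFree (C.fill (Fm.grad (Fm.and Fa Fb) Fc)) →
      Bisim M (C.fill (Fm.grad (Fm.and Fa Fb) Fc))
              (C.fill (Fm.and (Fm.grad Fa Fc) (Fm.grad Fb Fc)))) ∧
    (NegFree (C.fill (Fm.grad (Fm.or Fa Fb) Fc)) →
      Bisim M (C.fill (Fm.grad (Fm.or Fa Fb) Fc))
              (C.fill (Fm.or (Fm.grad Fa Fc) (Fm.grad Fb Fc)))) ∧
    (NegFree (C.fill (Fm.grad Fa (Fm.and Fb Fc))) →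
      Bisim M (C.fill (Fm.grad Fa (Fm.and Fb Fc)))
              (C.fill (Fm.and (Fm.grad Fa Fb) (Fm.grad Fa Fc)))) ∧
    (NegFree (C.fill (Fm.grad Fa (Fm.or Fb Fc))) →
      Bisim M (C.fill (Fm.grad Fa (Fm.or Fb Fc)))
              (C.fill (Fm.or (Fm.grad Fa Fb) (Fm.grad Fa Fc)))) ∧
    (NegFree (C.fill (Fm.grad (Fm.grad Fa Fb) Fc)) →
      Bisim M (C.fill (Fm.grad (Fm.grad Fa Fb) Fc))
              (C.fill (Fm.and (Fm.grad Fa Fc)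
                (Fm.or (Fm.grad Fa Fb) (Fm.grad Fa (Fm.grad Fb Fc)))))) := by
  refine ⟨fun _ => ?_, fun _ => ?_, fun _ => ?_, fun _ => ?_, fun _ => ?_⟩
  · exact bisim_of_gstep M (ctx_gstep C (GStep.gradAndL Fa Fb Fc))
  · exact bisim_of_gstep M (ctx_gstep C (GStep.gradOrL Fa Fb Fc))
  · exact bisim_of_gstep M (ctx_gstep C (GStep.gradAndR Fa Fb Fc))
  · exact bisim_of_gstep M (ctx_gstep C (GStep.gradOrR Fa Fb Fc))
  · exact bisim_of_gstep M (ctx_gstep C (GStep.gradAssoc Fa Fb Fc))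
end

section
/- For every valuation frame M, every unit chain s₀⋗⋯⋗s_k, and every formula F in unit chain expansion, the chain-extension law holds: [M ⊨ (s₀⋗s₁⋗⋯⋗s_k)⋗F] computed via reduction equals [M ⊨ (s₀⋗F) ∧ ((s₀⋗s₁⋗⋯⋗s_k) ∨ ((s₀⋗s₁⋗F) ∧ (s₀⋗s₁⋗s₂⋗F) ∧ ⋯ ∧ (s₀⋗s₁⋗⋯⋗s_k⋗F)))]. -/
/-- The unit chain s₀⋗s₁⋗⋯⋗s_k given by a head and the list of remaining atoms. -/
def chainOf {A : Type} (s : Atom A) : List (Atom A) → Fm A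
  | [] => .atom s
  | t :: l => .grad (.atom s) (chainOf t l)

/-- Prepend a list of atoms as a ⋗-chain onto a formula. -/
def chainF {A : Type} : List (Atom A) → Fm A → Fm A
  | [], F => F
  | s :: l, F => .grad (.atom s) (chainF l F)

/-- Conjunction of a nonempty list of formulas. -/
def conjList {A : Type} : Fm A → List (Fm A) → Fm A
  | F, [] => F
  | F, G :: l => .and F (conjList G l)

/-- (s₀⋗s₁⋗F) ∧ (s₀⋗s₁⋗s₂⋗F) ∧ ⋯ ∧ (s₀⋗s₁⋗⋯⋗s_k⋗F) where the chain is
s₀ :: s₁ :: rest. -/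
def conjAll {A : Type} (s₀ s₁ : Atom A) (rest : List (Atom A)) (F : Fm A) : Fm A :=
  conjList (chainF [s₀, s₁] F)
    ((rest.inits.tail).map (fun p => chainF (s₀ :: s₁ :: p) F))

/-! The local interpretation sees a prefix only through its length (`I_sync`), so every
formula, not only one in unit chain expansion, can be read at a depth `n`, with
`F ⋗ G` read as `[F]ₙ ∧ [G]ₙ₊₁`. This reading is invariant under all reduction rules and
agrees with the valuation on formulas in unit chain expansion, so both sides of the law can
be evaluated before reduction. There `(s₀⋗⋯⋗s_k)⋗F` reads `[s₀⋯s_k]₀ ∧ [F]₁`, and so does the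
right-hand side, because its last conjunct `s₀⋗⋯⋗s_k⋗F` already forces the chain. -/

namespace GFrame

variable {A : Type} {c : A → A}

def valAt (M : GFrame A c) : ℕ → Fm A → Bool
  | n, .atom s => M.I (List.replicate n .top) s
  | n, .and F G => M.valAt n F && M.valAt n G
  | n, .or F G => M.valAt n F || M.valAt n G
  | n, .neg F => !M.valAt n F
  | n, .grad F G => M.valAt n F && M.valAt (n + 1) G

variable (M : GFrame A c)

theorem I_eq_I_replicate (ψ : List (Atom A)) (s : Atom A) :
    M.I ψ s = M.I (List.replicate ψ.length .top) s :=
  M.I_sync _ _ _ (by simp)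

theorem I_atom_compl (ψ : List (Atom A)) (s : Atom A) : M.I ψ (s.compl c) = !M.I ψ s := by
  cases s with
  | lit a => have := M.I_compl ψ a; cases h : M.I ψ (.lit a) <;> simp_all [Atom.compl]
  | top => simp [Atom.compl, M.I_top, M.I_bot]
  | bot => simp [Atom.compl, M.I_top, M.I_bot]

theorem valAt_eq_of_step {F F' : Fm A} (h : Step c F F') (n : ℕ) :
    M.valAt n F = M.valAt n F' := by
  induction h generalizing n <;> simp only [valAt, I_atom_compl] at * <;> grind

theorem valAt_eq_of_red {F F' : Fm A} (h : Red c F F') (n : ℕ) :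
    M.valAt n F = M.valAt n F' := by
  induction h with
  | refl => rfl
  | tail _ hs ih => exact ih.trans (M.valAt_eq_of_step hs n)

theorem _root_.UnitTail.valAux_eq_valAt {F : Fm A} (hF : UnitTail F) (ψ : List (Atom A)) :
    M.valAux ψ F = M.valAt ψ.length F := by
  induction hF generalizing ψ with
  | atom s => rw [valAux, valAt, I_eq_I_replicate]
  | grad s _ ih => simp [valAux, valAt, ih, I_eq_I_replicate M ψ s]

theorem _root_.UCE.valAux_eq_valAt {F : Fm A} (hF : UCE F) (ψ : List (Atom A)) :
    M.valAux ψ F = M.valAt ψ.length F := by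
  induction hF generalizing ψ with
  | atom s => rw [valAux, valAt, I_eq_I_replicate]
  | and _ _ ih₁ ih₂ | or _ _ ih₁ ih₂ => simp [valAux, valAt, ih₁, ih₂]
  | chain s hG => simp [valAux, valAt, hG.valAux_eq_valAt M, I_eq_I_replicate M ψ s]

theorem val_eq_valAt_of_red {F G : Fm A} (h : Red c F G) (hG : UCE G) :
    M.val G = M.valAt 0 F := by
  rw [val, hG.valAux_eq_valAt M, M.valAt_eq_of_red h]
  rfl

theorem valAt_chainF (s : Atom A) (l : List (Atom A)) (F : Fm A) (n : ℕ) :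
    M.valAt n (chainF (s :: l) F) =
      (M.valAt n (chainOf s l) && M.valAt (n + l.length + 1) F) := by
  induction l generalizing s n with
  | nil => rfl
  | cons t l ih =>
    simp only [chainF, chainOf, valAt] at ih ⊢
    rw [ih, Bool.and_assoc, List.length_cons]
    ac_rfl

theorem valAt_conjList_eq_true (F : Fm A) (l : List (Fm A)) (n : ℕ) :
    M.valAt n (conjList F l) = true ↔ ∀ G ∈ F :: l, M.valAt n G = true := by
  induction l generalizing F with
  | nil => simp [conjList]
  | cons G l ih => simp [conjList, valAt, ih]

theorem valAt_chainF_of_conjAll {s₀ s₁ : Atom A} {rest : List (Atom A)} {F : Fm A} {n : ℕ}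
    (h : M.valAt n (conjAll s₀ s₁ rest F) = true) :
    M.valAt n (chainF (s₀ :: s₁ :: rest) F) = true := by
  rw [conjAll, valAt_conjList_eq_true] at h
  apply h
  have hinits : rest.inits = [] :: rest.inits.tail := by cases rest <;> rfl
  have hmem := List.mem_map_of_mem (f := fun p => chainF (s₀ :: s₁ :: p) F)
    ((List.mem_inits _ _).2 (List.prefix_refl rest))
  rwa [hinits, List.map_cons] at hmem

theorem valAt_grad_chainOf (s₀ s₁ : Atom A) (rest : List (Atom A)) (F : Fm A) (n : ℕ) :
    M.valAt n (.grad (chainOf s₀ (s₁ :: rest)) F) =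
      M.valAt n (.and (.grad (.atom s₀) F)
        (.or (chainOf s₀ (s₁ :: rest)) (conjAll s₀ s₁ rest F))) := by
  have hchain : M.valAt n (conjAll s₀ s₁ rest F) = true →
      M.valAt n (chainOf s₀ (s₁ :: rest)) = true := fun h => by
    have := M.valAt_chainF_of_conjAll h
    rw [valAt_chainF, Bool.and_eq_true] at this
    exact this.1
  simp only [chainOf, valAt] at hchain ⊢
  grind

end GFrame

theorem stmt18_general {A : Type} (c : A → A)
    (M : GFrame A c) (s₀ s₁ : Atom A) (rest : List (Atom A))
    {F : Fm A} (G H : Fm A)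
    (hG : Red c (Fm.grad (chainOf s₀ (s₁ :: rest)) F) G) (huG : UCE G)
    (hH : Red c (Fm.and (Fm.grad (Fm.atom s₀) F)
            (Fm.or (chainOf s₀ (s₁ :: rest)) (conjAll s₀ s₁ rest F))) H)
    (huH : UCE H) :
    M.val G = M.val H := by
  rw [M.val_eq_valAt_of_red hG huG, M.val_eq_valAt_of_red hH huH, M.valAt_grad_chainOf]

/-- the chain-extension law: the (reduction-computed) value of
(s₀⋗s₁⋗⋯⋗s_k)⋗F equals that of
(s₀⋗F) ∧ ((s₀⋗⋯⋗s_k) ∨ ((s₀⋗s₁⋗F) ∧ ⋯ ∧ (s₀⋗⋯⋗s_k⋗F))). -/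
theorem stmt18 {A : Type} (c : A → A) (hc : Function.Involutive c)
    (M : GFrame A c) (s₀ s₁ : Atom A) (rest : List (Atom A))
    {F : Fm A} (hF : UCE F) (G H : Fm A)
    (hG : Red c (Fm.grad (chainOf s₀ (s₁ :: rest)) F) G) (huG : UCE G)
    (hH : Red c (Fm.and (Fm.grad (Fm.atom s₀) F)
            (Fm.or (chainOf s₀ (s₁ :: rest)) (conjAll s₀ s₁ rest F))) H)
    (huH : UCE H) :
    M.val G = M.val H :=
  stmt18_general c M s₀ s₁ rest G H hG huG hH huH
end
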